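/- arXiv:2101.07199 — 8 statements merged into one kernel-verified Lean document; each statement's English description precedes it below -/
import Mathlib

section
/- If a discrete coarse space X_𝓑 admits a 2-selector, then the bornology 𝓑 has an interval base: there exists a linear order ≤ on X such that the family of closed intervals {[a,b] : a ≤ b} is a base for 𝓑. -/
open Set

variable {X : Type*}

/-- A bornology: contains all finite sets, closed under subsets and finite unions. -/
def IsBornology (𝓑 : Set (Set X)) : Prop :=
  (∀ s : Set X, s.Finite → s ∈ 𝓑) ∧
  (∀ s t : Set X, s ∈ 𝓑 → t ⊆ s → t ∈ 𝓑) ∧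
  (∀ s t : Set X, s ∈ 𝓑 → t ∈ 𝓑 → s ∪ t ∈ 𝓑)

/-- The entourage `Δ_X ∪ (B × B)`. -/
def entB (B : Set X) : Set (X × X) := {p | p.1 = p.2} ∪ B ×ˢ B

/-- The ball `E[A]`. -/
def ball (E : Set (X × X)) (A : Set X) : Set X := {y | ∃ a ∈ A, (a, y) ∈ E}

/-- `(A, A') ∈ E^♭` : each of `A`, `A'` is in the `E`-ball of the other. -/
def relFlat (E : Set (X × X)) (A A' : Set X) : Prop :=
  A ⊆ ball E A' ∧ A' ⊆ ball E A

/-- Two-element subsets. -/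
def IsPair (A : Set X) : Prop := ∃ a b : X, a ≠ b ∧ A = {a, b}

/-- A selector of the discrete coarse space `X_𝓑`. -/
def IsSelector (𝓑 : Set (Set X)) (f : Set X → X) : Prop :=
  (∀ A ∈ 𝓑, A.Nonempty → f A ∈ A) ∧
  (∀ B ∈ 𝓑, ∃ C ∈ 𝓑, ∀ A A' : Set X, A ∈ 𝓑 → A.Nonempty → A' ∈ 𝓑 → A'.Nonempty →
    relFlat (entB B) A A' → (f A, f A') ∈ entB C)

/-- A 2-selector of the discrete coarse space `X_𝓑`. -/
def IsTwoSelector (𝓑 : Set (Set X)) (f : Set X → X) : Prop :=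
  (∀ A : Set X, IsPair A → f A ∈ A) ∧
  (∀ B ∈ 𝓑, ∃ C ∈ 𝓑, ∀ A A' : Set X, IsPair A → IsPair A' →
    relFlat (entB B) A A' → (f A, f A') ∈ entB C)

/-- `𝓑` has an interval base for some linear order on `X`. -/
def HasIntervalBase (𝓑 : Set (Set X)) : Prop :=
  ∃ r : LinearOrder X,
    (∀ a b : X, {x | r.le a x ∧ r.le x b} ∈ 𝓑) ∧
    (∀ B ∈ 𝓑, ∃ a b : X, B ⊆ {x | r.le a x ∧ r.le x b})

/-- A coarse structure (each entourage contains the diagonal). -/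
def IsCoarseStructure (𝓔 : Set (Set (X × X))) : Prop :=
  (∀ E ∈ 𝓔, ∀ x : X, (x, x) ∈ E) ∧
  (∀ E ∈ 𝓔, ∀ F ∈ 𝓔, {p : X × X | ∃ z, (p.1, z) ∈ E ∧ (z, p.2) ∈ F} ∈ 𝓔) ∧
  (∀ E ∈ 𝓔, {p : X × X | (p.2, p.1) ∈ E} ∈ 𝓔) ∧
  (∀ E ∈ 𝓔, ∀ E' : Set (X × X), (∀ x : X, (x, x) ∈ E') → E' ⊆ E → E' ∈ 𝓔)

/-- A subset is bounded in the coarse space `(X, 𝓔)`. -/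
def IsBoundedIn (𝓔 : Set (Set (X × X))) (Y : Set X) : Prop :=
  ∃ E ∈ 𝓔, ∃ x : X, Y ⊆ ball E {x}


section AuxSelector

variable {X : Type*}

open Classical in
noncomputable def mkLO {Y : Type*} (le : Y → Y → Prop) (hrefl : ∀ a, le a a)
    (htrans : ∀ a b c, le a b → le b c → le a c)
    (hanti : ∀ a b, le a b → le b a → a = b)
    (htot : ∀ a b, le a b ∨ le b a) : LinearOrder Y :=
  { le := le
    le_refl := hrefl
    le_trans := htrans
    le_antisymm := hanti
    le_total := htot
    toDecidableLE := fun _ _ => Classical.dec _ }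

/-- the tournament induced by `f` : `x` is below `y`. -/
def ltf (f : Set X → X) (x y : X) : Prop := x ≠ y ∧ f {x, y} = y

lemma ltf_total {𝓑 : Set (Set X)} {f : Set X → X} (hf : IsTwoSelector 𝓑 f) {x y : X}
    (hxy : x ≠ y) : ltf f x y ∨ ltf f y x := by
  have hp : IsPair ({x, y} : Set X) := ⟨x, y, hxy, rfl⟩
  rcases hf.1 _ hp with h | h
  · right
    exact ⟨hxy.symm, by rwa [Set.pair_comm y x]⟩
  · left
    exact ⟨hxy, h⟩

lemma ltf_asymm {f : Set X → X} {x y : X} (h1 : ltf f x y) (h2 : ltf f y x) : False := by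
  rcases h1 with ⟨hne, he1⟩
  rcases h2 with ⟨_, he2⟩
  rw [Set.pair_comm y x] at he2
  exact hne (he2.symm.trans he1)

/-- Key uniformity property extracted from the 2-selector. -/
lemma keyQ {𝓑 : Set (Set X)} (h𝓑 : IsBornology 𝓑) {f : Set X → X}
    (hf : IsTwoSelector 𝓑 f) {B : Set X} (hB : B ∈ 𝓑) :
    ∃ C ∈ 𝓑, B ⊆ C ∧ ∀ x ∉ C, ∀ a ∈ B, ∀ b ∈ B, ltf f a x → ltf f b x := by
  obtain ⟨C₀, hC₀, hsel⟩ := hf.2 B hB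
  refine ⟨C₀ ∪ B, h𝓑.2.2 _ _ hC₀ hB, fun x hx => Or.inr hx, ?_⟩
  intro x hx a ha b hb hax
  have hxb : x ≠ b := fun h => hx (Or.inr (h ▸ hb))
  by_contra hnb
  rcases ltf_total hf hxb with h | h
  · have hpA : IsPair ({a, x} : Set X) := ⟨a, x, hax.1, rfl⟩
    have hpA' : IsPair ({x, b} : Set X) := ⟨x, b, hxb, rfl⟩
    have hflat : relFlat (entB B) ({a, x} : Set X) ({x, b} : Set X) := by
      constructor
      · intro z hz
        rcases hz with rfl | rfl
        · exact ⟨b, Or.inr rfl, Or.inr ⟨hb, ha⟩⟩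
        · exact ⟨z, Or.inl rfl, Or.inl rfl⟩
      · intro z hz
        rcases hz with rfl | rfl
        · exact ⟨z, Or.inr rfl, Or.inl rfl⟩
        · exact ⟨a, Or.inl rfl, Or.inr ⟨ha, hb⟩⟩
    have hmem := hsel _ _ hpA hpA' hflat
    rw [hax.2, h.2] at hmem
    rcases hmem with h' | h'
    · exact hxb h'
    · exact hx (Or.inl h'.1)
  · exact hnb h

/-- Construction of a "ray" order on one side of the space, by Zorn's lemma. -/
lemma sideOrder {𝓑 : Set (Set X)} (h𝓑 : IsBornology 𝓑) (U : Set X) (r : X → X → Prop)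
    (rtot : ∀ x ∈ U, ∀ y ∈ U, x ≠ y → r x y ∨ r y x)
    (rasym : ∀ x y, r x y → r y x → False)
    (downs : ∀ y ∈ U, {z | z ∈ U ∧ r z y} ∈ 𝓑)
    (hβ : ∀ Z ∈ 𝓑, ∃ C ∈ 𝓑, ∀ x ∈ U, x ∉ C → ∀ z ∈ Z, r z x) :
    ∃ le : X → X → Prop,
      (∀ x, le x x) ∧
      (∀ x y z, x ∈ U → y ∈ U → z ∈ U → le x y → le y z → le x z) ∧
      (∀ x y, x ∈ U → y ∈ U → le x y → le y x → x = y) ∧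
      (∀ x y, x ∈ U → y ∈ U → le x y ∨ le y x) ∧
      (∀ b ∈ U, {y | y ∈ U ∧ le y b} ∈ 𝓑) ∧
      (∀ Z ∈ 𝓑, U.Nonempty → ∃ b ∈ U, ∀ z ∈ Z, z ∈ U → le z b) := by
  classical
  letI L : LinearOrder X := IsWellOrder.linearOrder WellOrderingRel
  set wle : X → X → Prop := fun x y => L.le x y with hwle
  by_cases hUb : U ∈ 𝓑
  · rcases em U.Nonempty with ⟨u0, hu0⟩ | hne
    · refine ⟨fun y y' => y' = u0 ∨ (y ≠ u0 ∧ wle y y'), ?_, ?_, ?_, ?_, ?_, ?_⟩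
      · intro x
        by_cases hx : x = u0
        · exact Or.inl hx
        · exact Or.inr ⟨hx, le_refl x⟩
      · rintro x y z _ _ _ (rfl | ⟨hxu, hxy⟩) h2
        · rcases h2 with h2 | h2
          · exact Or.inl h2
          · exact absurd rfl h2.1
        · rcases h2 with rfl | ⟨hyu, hyz⟩
          · exact Or.inl rfl
          · exact Or.inr ⟨hxu, le_trans hxy hyz⟩
      · rintro x y _ _ (rfl | ⟨hxu, hxy⟩) (rfl | ⟨hyu, hyx⟩)
        · rfl
        · exact absurd rfl hyu
        · exact absurd rfl hxu
        · exact le_antisymm hxy hyx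
      · intro x y _ _
        by_cases hy : y = u0
        · exact Or.inl (Or.inl hy)
        · by_cases hx : x = u0
          · exact Or.inr (Or.inl hx)
          · rcases le_total x y with h | h
            · exact Or.inl (Or.inr ⟨hx, h⟩)
            · exact Or.inr (Or.inr ⟨hy, h⟩)
      · intro b _
        exact h𝓑.2.1 _ _ hUb (fun y hy => hy.1)
      · intro Z _ _
        exact ⟨u0, hu0, fun z _ _ => Or.inl rfl⟩
    · refine ⟨wle, fun x => le_refl x, fun x y z _ _ _ => le_trans,
        fun x y _ _ => le_antisymm, fun x y _ _ => le_total x y, ?_, ?_⟩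
      · intro b _
        exact h𝓑.2.1 _ _ hUb (fun y hy => hy.1)
      · intro Z _ hne'
        exact absurd hne' hne
  · -- `U` unbounded : Zorn construction
    set DOWN : X → Set X := fun u => {z | z ∈ U ∧ r z u} with hDOWN
    set dc : X → Set X := fun u => insert u (DOWN u) with hdc
    have hdcU : ∀ u ∈ U, dc u ⊆ U := by
      intro u hu z hz
      rcases hz with rfl | hz
      · exact hu
      · exact hz.1
    have hdcB : ∀ u ∈ U, dc u ∈ 𝓑 := by
      intro u hu
      have h1 : ({u} : Set X) ∈ 𝓑 := h𝓑.1 _ (finite_singleton u)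
      have h2 := h𝓑.2.2 _ _ h1 (downs u hu)
      apply h𝓑.2.1 _ _ h2
      intro z hz
      rcases hz with rfl | hz
      · exact Or.inl rfl
      · exact Or.inr hz
    set 𝒜 : Set (Set X) := {S | S ⊆ U ∧ ∀ u ∈ S, ∀ v ∈ S, u ≠ v →
      dc u ⊆ DOWN v ∨ dc v ⊆ DOWN u} with h𝒜
    obtain ⟨S, hSmax⟩ := zorn_subset 𝒜 (by
      intro c hc hchain
      refine ⟨⋃₀ c, ⟨?_, ?_⟩, fun s hs => subset_sUnion_of_mem hs⟩
      · rintro x ⟨s, hs, hxs⟩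
        exact (hc hs).1 hxs
      · rintro u ⟨s, hs, hus⟩ v ⟨t, ht, hvt⟩ huv
        rcases eq_or_ne s t with rfl | hst
        · exact (hc hs).2 u hus v hvt huv
        · rcases hchain hs ht hst with hsub | hsub
          · exact (hc ht).2 u (hsub hus) v hvt huv
          · exact (hc hs).2 u hus v (hsub hvt) huv)
    have hSA : S ∈ 𝒜 := hSmax.1
    have hSU : S ⊆ U := hSA.1
    have hSpair := hSA.2
    have hW : ∀ C ∈ 𝓑, S ⊆ C → ∃ C₂ ∈ 𝓑, ∀ u ∈ S, dc u ⊆ C₂ := by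
      intro C hC hSC
      obtain ⟨C₂, hC₂, hprop⟩ := hβ C hC
      refine ⟨C₂, hC₂, ?_⟩
      intro u hu z hz
      by_contra hzC
      have hzU : z ∈ U := hdcU u (hSU hu) hz
      have hruz : r u z := hprop z hzU hzC u (hSC hu)
      rcases hz with rfl | hz
      · exact rasym _ _ hruz hruz
      · exact rasym _ _ hruz hz.2
    have hcover : ∀ y ∈ U, ∃ u ∈ S, y ∈ dc u := by
      intro y hy
      by_contra hunc
      push_neg at hunc
      have ha : ∀ u ∈ S, r u y := by
        intro u hu
        have hyu : y ≠ u := by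
          rintro rfl
          exact hunc y hu (Or.inl rfl)
        rcases rtot u (hSU hu) y hy (fun h => hyu h.symm) with h | h
        · exact h
        · exact absurd (Or.inr ⟨hy, h⟩ : y ∈ dc u) (hunc u hu)
      obtain ⟨C₁, hC₁, hp₁⟩ := hβ (dc y) (hdcB y hy)
      have hSC₁ : S ⊆ C₁ := by
        intro u hu
        by_contra hne'
        exact rasym _ _ (ha u hu) (hp₁ u (hSU hu) hne' y (Or.inl rfl))
      obtain ⟨C₂, hC₂, hWC₂⟩ := hW C₁ hC₁ hSC₁
      obtain ⟨C₃, hC₃, hp₃⟩ := hβ C₂ hC₂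
      have hnsub : ¬ U ⊆ C₃ := fun hsub => hUb (h𝓑.2.1 _ _ hC₃ hsub)
      obtain ⟨v, hvU, hvC₃⟩ := not_subset.mp hnsub
      have hvS : v ∉ S := by
        intro hvS
        have := hp₃ v hvU hvC₃ v (hWC₂ v hvS (Or.inl rfl))
        exact rasym _ _ this this
      have hins : insert v S ∈ 𝒜 := by
        constructor
        · intro z hz
          rcases hz with rfl | hz
          · exact hvU
          · exact hSU hz
        · intro u hu w hw huw
          rcases hu with rfl | hu
          · rcases hw with rfl | hw
            · exact absurd rfl huw
            · right
              intro z hz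
              exact ⟨hdcU w (hSU hw) hz, hp₃ u hvU hvC₃ z (hWC₂ w hw hz)⟩
          · rcases hw with rfl | hw
            · left
              intro z hz
              exact ⟨hdcU u (hSU hu) hz, hp₃ w hvU hvC₃ z (hWC₂ u hu hz)⟩
            · exact hSpair u hu w hw huw
      have := hSmax.2 hins (subset_insert v S)
      exact hvS (this (Or.inl rfl))
    set Sy : X → Set X := fun y => {u | u ∈ S ∧ y ∈ dc u} with hSy
    have hT2 : ∀ y y', Sy y ⊆ Sy y' ∨ Sy y' ⊆ Sy y := by
      intro y y'
      by_cases h : Sy y ⊆ Sy y'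
      · exact Or.inl h
      · obtain ⟨u, hu, hu'⟩ := not_subset.mp h
        right
        intro v hv
        have hne : u ≠ v := by
          rintro rfl
          exact hu' hv
        rcases hSpair u hu.1 v hv.1 hne with hcase | hcase
        · exact ⟨hv.1, Or.inr (hcase hu.2)⟩
        · exact absurd ⟨hu.1, Or.inr (hcase hv.2)⟩ hu'
    have hT3 : ∀ u ∈ S, ∀ v ∈ S, Sy u = Sy v → u = v := by
      intro u hu v hv heq
      by_contra hne
      have huu : u ∈ Sy u := ⟨hu, Or.inl rfl⟩
      have hvv : v ∈ Sy v := ⟨hv, Or.inl rfl⟩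
      rcases hSpair u hu v hv hne with hcase | hcase
      · have huv : r u v := (hcase (Or.inl rfl)).2
        rw [heq] at huu
        rcases huu.2 with h | h
        · exact hne h.symm
        · exact rasym _ _ huv h.2
      · have hvu : r v u := (hcase (Or.inl rfl)).2
        rw [← heq] at hvv
        rcases hvv.2 with h | h
        · exact hne h
        · exact rasym _ _ hvu h.2
    refine ⟨fun y y' => Sy y' ⊂ Sy y ∨ (Sy y = Sy y' ∧ (y = y' ∨ y' ∈ S ∨ (y ∉ S ∧ wle y y'))),
      ?_, ?_, ?_, ?_, ?_, ?_⟩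
    · intro x
      exact Or.inr ⟨rfl, Or.inl rfl⟩
    · rintro x y z _ _ _ (h1 | ⟨he1, ht1⟩) h2
      · rcases h2 with h2 | ⟨he2, ht2⟩
        · exact Or.inl (h2.trans h1)
        · exact Or.inl (he2 ▸ h1)
      · rcases h2 with h2 | ⟨he2, ht2⟩
        · exact Or.inl (by rw [he1]; exact h2)
        · refine Or.inr ⟨he1.trans he2, ?_⟩
          rcases ht1 with rfl | hyS | ⟨hxS, hxy⟩
          · exact ht2
          · rcases ht2 with rfl | hzS | ⟨hyS', _⟩
            · exact Or.inr (Or.inl hyS)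
            · exact Or.inr (Or.inl hzS)
            · exact absurd hyS hyS'
          · rcases ht2 with rfl | hzS | ⟨hyS', hyz⟩
            · exact Or.inr (Or.inr ⟨hxS, hxy⟩)
            · exact Or.inr (Or.inl hzS)
            · exact Or.inr (Or.inr ⟨hxS, le_trans hxy hyz⟩)
    · rintro x y _ _ (h1 | ⟨he1, ht1⟩) (h2 | ⟨he2, ht2⟩)
      · exact absurd (h1.trans h2) (ssubset_irrefl _)
      · rw [he2] at h1
        exact absurd h1 (ssubset_irrefl _)
      · rw [he1] at h2
        exact absurd h2 (ssubset_irrefl _)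
      · rcases ht1 with rfl | hyS | ⟨hxS, hxy⟩
        · rfl
        · rcases ht2 with rfl | hxS | ⟨hyS', _⟩
          · rfl
          · exact hT3 x hxS y hyS he1
          · exact absurd hyS hyS'
        · rcases ht2 with rfl | hxS' | ⟨hyS', hyx⟩
          · rfl
          · exact absurd hxS' hxS
          · exact le_antisymm hxy hyx
    · intro x y _ _
      rcases hT2 y x with hsub | hsub
      · by_cases he : Sy x = Sy y
        · by_cases hyS : y ∈ S
          · exact Or.inl (Or.inr ⟨he, Or.inr (Or.inl hyS)⟩)
          · by_cases hxS : x ∈ S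
            · exact Or.inr (Or.inr ⟨he.symm, Or.inr (Or.inl hxS)⟩)
            · rcases le_total x y with h | h
              · exact Or.inl (Or.inr ⟨he, Or.inr (Or.inr ⟨hxS, h⟩)⟩)
              · exact Or.inr (Or.inr ⟨he.symm, Or.inr (Or.inr ⟨hyS, h⟩)⟩)
        · exact Or.inl (Or.inl (HasSubset.Subset.ssubset_of_ne hsub (fun hh => he hh.symm)))
      · by_cases he : Sy x = Sy y
        · by_cases hyS : y ∈ S
          · exact Or.inl (Or.inr ⟨he, Or.inr (Or.inl hyS)⟩)
          · by_cases hxS : x ∈ S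
            · exact Or.inr (Or.inr ⟨he.symm, Or.inr (Or.inl hxS)⟩)
            · rcases le_total x y with h | h
              · exact Or.inl (Or.inr ⟨he, Or.inr (Or.inr ⟨hxS, h⟩)⟩)
              · exact Or.inr (Or.inr ⟨he.symm, Or.inr (Or.inr ⟨hyS, h⟩)⟩)
        · exact Or.inr (Or.inl (HasSubset.Subset.ssubset_of_ne hsub he))
    · intro b hb
      obtain ⟨u, huS, hbu⟩ := hcover b hb
      apply h𝓑.2.1 _ _ (hdcB u (hSU huS))
      rintro y ⟨hyU, hle⟩
      have hu : u ∈ Sy y := by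
        rcases hle with hstrict | ⟨heq, _⟩
        · exact hstrict.subset ⟨huS, hbu⟩
        · rw [heq]
          exact ⟨huS, hbu⟩
      exact hu.2
    · intro Z hZ _
      obtain ⟨C, hC, hpC⟩ := hβ Z hZ
      have hex : ∃ u ∈ S, u ∉ C := by
        by_contra hall
        push_neg at hall
        obtain ⟨C₂, hC₂, hWC₂⟩ := hW C hC hall
        apply hUb
        apply h𝓑.2.1 _ _ hC₂
        intro y hy
        obtain ⟨u, huS, hyu⟩ := hcover y hy
        exact hWC₂ u huS hyu
      obtain ⟨u, huS, huC⟩ := hex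
      refine ⟨u, hSU huS, ?_⟩
      intro z hzZ hzU
      have hrzu : r z u := hpC u (hSU huS) huC z hzZ
      have hsub : Sy u ⊆ Sy z := by
        rintro v ⟨hvS, huv⟩
        refine ⟨hvS, ?_⟩
        rcases huv with rfl | huv
        · exact Or.inr ⟨hzU, hrzu⟩
        · have hne : u ≠ v := by
            rintro rfl
            exact rasym _ _ huv.2 huv.2
          rcases hSpair u huS v hvS hne with hcase | hcase
          · exact Or.inr (hcase (Or.inr ⟨hzU, hrzu⟩))
          · exact absurd (hcase (Or.inl rfl)).2 (fun hh => rasym _ _ huv.2 hh)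
      by_cases heq : Sy z = Sy u
      · exact Or.inr ⟨heq, Or.inr (Or.inl huS)⟩
      · exact Or.inl (HasSubset.Subset.ssubset_of_ne hsub (fun hh => heq hh.symm))

/-- Assembling the two rays and the centre point into a global linear order. -/
lemma assembleOrder {𝓑 : Set (Set X)} (h𝓑 : IsBornology 𝓑)
    (U D : Set X) (x₀ : X)
    (hUD : ∀ x, x ∈ U → x ∈ D → False)
    (hx₀U : x₀ ∉ U) (hx₀D : x₀ ∉ D)
    (htri : ∀ x, x ∈ D ∨ x = x₀ ∨ x ∈ U)
    (leU leD : X → X → Prop)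
    (hUrefl : ∀ x, leU x x)
    (hUtrans : ∀ x y z, x ∈ U → y ∈ U → z ∈ U → leU x y → leU y z → leU x z)
    (hUanti : ∀ x y, x ∈ U → y ∈ U → leU x y → leU y x → x = y)
    (hUtot : ∀ x y, x ∈ U → y ∈ U → leU x y ∨ leU y x)
    (hUinit : ∀ b ∈ U, {y | y ∈ U ∧ leU y b} ∈ 𝓑)
    (hUbnd : ∀ Z ∈ 𝓑, U.Nonempty → ∃ b ∈ U, ∀ z ∈ Z, z ∈ U → leU z b)
    (hDrefl : ∀ x, leD x x)
    (hDtrans : ∀ x y z, x ∈ D → y ∈ D → z ∈ D → leD x y → leD y z → leD x z)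
    (hDanti : ∀ x y, x ∈ D → y ∈ D → leD x y → leD y x → x = y)
    (hDtot : ∀ x y, x ∈ D → y ∈ D → leD x y ∨ leD y x)
    (hDinit : ∀ b ∈ D, {y | y ∈ D ∧ leD y b} ∈ 𝓑)
    (hDbnd : ∀ Z ∈ 𝓑, D.Nonempty → ∃ b ∈ D, ∀ z ∈ Z, z ∈ D → leD z b) :
    HasIntervalBase 𝓑 := by
  classical
  set le : X → X → Prop := fun x y =>
    (x ∈ D ∧ y ∉ D) ∨ (x ∉ U ∧ y ∈ U) ∨ (x ∈ D ∧ y ∈ D ∧ leD y x) ∨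
    (x ∈ U ∧ y ∈ U ∧ leU x y) ∨ x = y with hledef
  have cU : ∀ x y, le x y → x ∈ U → y ∈ U ∧ leU x y := by
    intro x y h hx
    rcases h with ⟨h1, h2⟩ | ⟨h1, h2⟩ | ⟨h1, h2, h3⟩ | ⟨h1, h2, h3⟩ | rfl
    · exact absurd h1 (fun hh => hUD x hx hh)
    · exact absurd hx h1
    · exact absurd h1 (fun hh => hUD x hx hh)
    · exact ⟨h2, h3⟩
    · exact ⟨hx, hUrefl x⟩
  have cD : ∀ x y, le x y → y ∈ D → x ∈ D ∧ leD y x := by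
    intro x y h hy
    rcases h with ⟨h1, h2⟩ | ⟨h1, h2⟩ | ⟨h1, h2, h3⟩ | ⟨h1, h2, h3⟩ | rfl
    · exact absurd hy h2
    · exact absurd h2 (fun hh => hUD y hh hy)
    · exact ⟨h1, h3⟩
    · exact absurd h2 (fun hh => hUD y hh hy)
    · exact ⟨hy, hDrefl _⟩
  have hrefl : ∀ x, le x x := fun x => Or.inr (Or.inr (Or.inr (Or.inr rfl)))
  have htrans : ∀ x y z, le x y → le y z → le x z := by
    intro x y z h1 h2
    by_cases hzD : z ∈ D
    · obtain ⟨hyD, hzy⟩ := cD y z h2 hzD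
      obtain ⟨hxD, hyx⟩ := cD x y h1 hyD
      exact Or.inr (Or.inr (Or.inl ⟨hxD, hzD, hDtrans z y x hzD hyD hxD hzy hyx⟩))
    · by_cases hxU : x ∈ U
      · obtain ⟨hyU, hxy⟩ := cU x y h1 hxU
        obtain ⟨hzU, hyz⟩ := cU y z h2 hyU
        exact Or.inr (Or.inr (Or.inr (Or.inl ⟨hxU, hzU, hUtrans x y z hxU hyU hzU hxy hyz⟩)))
      · by_cases hzU : z ∈ U
        · exact Or.inr (Or.inl ⟨hxU, hzU⟩)
        · have hyU : y ∉ U := fun hy => hzU (cU y z h2 hy).1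
          by_cases hyD : y ∈ D
          · exact Or.inl ⟨(cD x y h1 hyD).1, hzD⟩
          · have hy : y = x₀ := ((htri y).resolve_left hyD).resolve_right hyU
            have hz : z = x₀ := ((htri z).resolve_left hzD).resolve_right hzU
            rw [hz, ← hy]
            exact h1
  have hanti : ∀ x y, le x y → le y x → x = y := by
    intro x y h1 h2
    by_cases hxD : x ∈ D
    · obtain ⟨hyD, hxy'⟩ := cD y x h2 hxD
      obtain ⟨_, hyx'⟩ := cD x y h1 hyD
      exact hDanti x y hxD hyD hxy' hyx'
    · by_cases hxU : x ∈ U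
      · obtain ⟨hyU, hxy⟩ := cU x y h1 hxU
        obtain ⟨_, hyx⟩ := cU y x h2 hyU
        exact hUanti x y hxU hyU hxy hyx
      · have hyD : y ∉ D := fun hy => hxD (cD x y h1 hy).1
        have hyU : y ∉ U := fun hy => hxU (cU y x h2 hy).1
        have hy : y = x₀ := ((htri y).resolve_left hyD).resolve_right hyU
        have hx : x = x₀ := ((htri x).resolve_left hxD).resolve_right hxU
        rw [hx, hy]
  have htot : ∀ x y, le x y ∨ le y x := by
    intro x y
    by_cases hxD : x ∈ D
    · by_cases hyD : y ∈ D
      · rcases hDtot y x hyD hxD with h | h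
        · exact Or.inl (Or.inr (Or.inr (Or.inl ⟨hxD, hyD, h⟩)))
        · exact Or.inr (Or.inr (Or.inr (Or.inl ⟨hyD, hxD, h⟩)))
      · exact Or.inl (Or.inl ⟨hxD, hyD⟩)
    · by_cases hyD : y ∈ D
      · exact Or.inr (Or.inl ⟨hyD, hxD⟩)
      · by_cases hxU : x ∈ U
        · by_cases hyU : y ∈ U
          · rcases hUtot x y hxU hyU with h | h
            · exact Or.inl (Or.inr (Or.inr (Or.inr (Or.inl ⟨hxU, hyU, h⟩))))
            · exact Or.inr (Or.inr (Or.inr (Or.inr (Or.inl ⟨hyU, hxU, h⟩))))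
          · exact Or.inr (Or.inr (Or.inl ⟨hyU, hxU⟩))
        · by_cases hyU : y ∈ U
          · exact Or.inl (Or.inr (Or.inl ⟨hxU, hyU⟩))
          · have hy : y = x₀ := ((htri y).resolve_left hyD).resolve_right hyU
            have hx : x = x₀ := ((htri x).resolve_left hxD).resolve_right hxU
            exact Or.inl (Or.inr (Or.inr (Or.inr (Or.inr (hx.trans hy.symm)))))
  refine ⟨mkLO le hrefl (fun a b c => htrans a b c) hanti htot, ?_, ?_⟩
  · intro a b
    have S1B : {y | y ∈ D ∧ le a y} ∈ 𝓑 := by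
      by_cases haD : a ∈ D
      · apply h𝓑.2.1 _ _ (hDinit a haD)
        rintro y ⟨hyD, hle⟩
        exact ⟨hyD, (cD a y hle hyD).2⟩
      · apply h𝓑.2.1 _ _ (h𝓑.1 ∅ finite_empty)
        rintro y ⟨hyD, hle⟩
        exact absurd (cD a y hle hyD).1 haD
    have S2B : {y | y ∈ U ∧ le y b} ∈ 𝓑 := by
      by_cases hbU : b ∈ U
      · apply h𝓑.2.1 _ _ (hUinit b hbU)
        rintro y ⟨hyU, hle⟩
        exact ⟨hyU, (cU y b hle hyU).2⟩
      · apply h𝓑.2.1 _ _ (h𝓑.1 ∅ finite_empty)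
        rintro y ⟨hyU, hle⟩
        exact absurd (cU y b hle hyU).1 hbU
    apply h𝓑.2.1 _ _
      (h𝓑.2.2 _ _ S1B (h𝓑.2.2 _ _ (h𝓑.1 _ (finite_singleton x₀)) S2B))
    rintro x ⟨h1, h2⟩
    rcases htri x with hx | hx | hx
    · exact Or.inl ⟨hx, h1⟩
    · exact Or.inr (Or.inl hx)
    · exact Or.inr (Or.inr ⟨hx, h2⟩)
  · intro B hB
    have hbnd : ∃ b, ∀ x ∈ B, le x b := by
      by_cases hU : U.Nonempty
      · obtain ⟨b, hbU, hbd⟩ := hUbnd B hB hU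
        refine ⟨b, ?_⟩
        intro x hx
        rcases htri x with h | h | h
        · exact Or.inl ⟨h, fun hh => hUD b hbU hh⟩
        · exact Or.inr (Or.inl ⟨h ▸ hx₀U, hbU⟩)
        · exact Or.inr (Or.inr (Or.inr (Or.inl ⟨h, hbU, hbd x hx h⟩)))
      · refine ⟨x₀, ?_⟩
        intro x hx
        rcases htri x with h | h | h
        · exact Or.inl ⟨h, hx₀D⟩
        · exact Or.inr (Or.inr (Or.inr (Or.inr h)))
        · exact absurd ⟨x, h⟩ hU
    have habnd : ∃ a, ∀ x ∈ B, le a x := by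
      by_cases hD : D.Nonempty
      · obtain ⟨a, haD, had⟩ := hDbnd B hB hD
        refine ⟨a, ?_⟩
        intro x hx
        rcases htri x with h | h | h
        · exact Or.inr (Or.inr (Or.inl ⟨haD, h, had x hx h⟩))
        · exact Or.inl ⟨haD, h ▸ hx₀D⟩
        · exact Or.inl ⟨haD, fun hh => hUD x h hh⟩
      · refine ⟨x₀, ?_⟩
        intro x hx
        rcases htri x with h | h | h
        · exact absurd ⟨x, h⟩ hD
        · exact Or.inr (Or.inr (Or.inr (Or.inr h.symm)))
        · exact Or.inr (Or.inl ⟨hx₀U, h⟩)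
    obtain ⟨b, hb⟩ := hbnd
    obtain ⟨a, ha⟩ := habnd
    exact ⟨a, b, fun x hx => ⟨ha x hx, hb x hx⟩⟩

end AuxSelector

/-- a 2-selector of `X_𝓑` yields an interval base for `𝓑`. -/
theorem intervalBase_of_twoSelector {X : Type*} (𝓑 : Set (Set X))
    (h𝓑 : IsBornology 𝓑) (h : ∃ f : Set X → X, IsTwoSelector 𝓑 f) :
    HasIntervalBase 𝓑 := by
  classical
  obtain ⟨f, hf⟩ := h
  set x₀ : X := f ∅ with hx₀def
  set U : Set X := {y | ltf f x₀ y} with hUdef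
  set D : Set X := {y | ltf f y x₀} with hDdef
  have hUD : ∀ x, x ∈ U → x ∈ D → False := fun x h1 h2 => ltf_asymm h1 h2
  have hx₀U : x₀ ∉ U := fun h => h.1 rfl
  have hx₀D : x₀ ∉ D := fun h => h.1 rfl
  have htri : ∀ x, x ∈ D ∨ x = x₀ ∨ x ∈ U := by
    intro x
    by_cases hx : x = x₀
    · exact Or.inr (Or.inl hx)
    · rcases ltf_total hf hx with hh | hh
      · exact Or.inl hh
      · exact Or.inr (Or.inr hh)
  have hins : ∀ Z ∈ 𝓑, insert x₀ Z ∈ 𝓑 := by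
    intro Z hZ
    apply h𝓑.2.1 _ _ (h𝓑.2.2 _ _ (h𝓑.1 _ (finite_singleton x₀)) hZ)
    intro z hz
    rcases hz with rfl | hz
    · exact Or.inl rfl
    · exact Or.inr hz
  -- hypotheses for the upper ray
  have hβU : ∀ Z ∈ 𝓑, ∃ C ∈ 𝓑, ∀ x ∈ U, x ∉ C → ∀ z ∈ Z, ltf f z x := by
    intro Z hZ
    obtain ⟨C, hC, hBC, hQ⟩ := keyQ h𝓑 hf (hins Z hZ)
    refine ⟨C, hC, ?_⟩
    intro x hxU hxC z hz
    exact hQ x hxC x₀ (Or.inl rfl) z (Or.inr hz) hxU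
  have hdownsU : ∀ y ∈ U, {z | z ∈ U ∧ ltf f z y} ∈ 𝓑 := by
    intro y hy
    have hB : ({x₀, y} : Set X) ∈ 𝓑 :=
      h𝓑.1 _ ((finite_singleton y).insert x₀)
    obtain ⟨C, hC, hBC, hQ⟩ := keyQ h𝓑 hf hB
    apply h𝓑.2.1 _ _ hC
    rintro z ⟨hzU, hzy⟩
    by_contra hzC
    exact ltf_asymm hzy (hQ z hzC x₀ (Or.inl rfl) y (Or.inr rfl) hzU)
  -- hypotheses for the lower ray (reversed tournament)
  have hβD : ∀ Z ∈ 𝓑, ∃ C ∈ 𝓑, ∀ x ∈ D, x ∉ C → ∀ z ∈ Z, ltf f x z := by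
    intro Z hZ
    obtain ⟨C, hC, hBC, hQ⟩ := keyQ h𝓑 hf (hins Z hZ)
    refine ⟨C, hC, ?_⟩
    intro x hxD hxC z hz
    by_contra hno
    have hxz : x ≠ z := fun hh => hxC (hBC (hh ▸ Or.inr hz))
    rcases ltf_total hf hxz with hh | hh
    · exact hno hh
    · exact ltf_asymm hxD (hQ x hxC z (Or.inr hz) x₀ (Or.inl rfl) hh)
  have hdownsD : ∀ y ∈ D, {z | z ∈ D ∧ ltf f y z} ∈ 𝓑 := by
    intro y hy
    have hB : ({x₀, y} : Set X) ∈ 𝓑 :=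
      h𝓑.1 _ ((finite_singleton y).insert x₀)
    obtain ⟨C, hC, hBC, hQ⟩ := keyQ h𝓑 hf hB
    apply h𝓑.2.1 _ _ hC
    rintro z ⟨hzD, hyz⟩
    by_contra hzC
    exact ltf_asymm hzD (hQ z hzC y (Or.inr rfl) x₀ (Or.inl rfl) hyz)
  obtain ⟨leU, hUrefl, hUtrans, hUanti, hUtot, hUinit, hUbnd⟩ :=
    sideOrder h𝓑 U (ltf f)
      (fun x _ y _ hxy => ltf_total hf hxy)
      (fun x y h1 h2 => ltf_asymm h1 h2)
      hdownsU hβU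
  obtain ⟨leD, hDrefl, hDtrans, hDanti, hDtot, hDinit, hDbnd⟩ :=
    sideOrder h𝓑 D (fun a b => ltf f b a)
      (by intro x _ y _ hxy; show ltf f y x ∨ ltf f x y; exact ltf_total hf hxy.symm)
      (by intro x y h1 h2; exact ltf_asymm (show ltf f y x from h1) (show ltf f x y from h2))
      hdownsD hβD
  exact assembleOrder h𝓑 U D x₀ hUD hx₀U hx₀D htri leU leD
    hUrefl hUtrans hUanti hUtot hUinit hUbnd
    hDrefl hDtrans hDanti hDtot hDinit hDbnd
end

section
/- Let 𝓑 be a bornology on X and let f be a 2-selector of the discrete coarse space X_𝓑. Define a ≺ b iff a = b or f({a,b}) = a (for a ≠ b). Then for every B ∈ 𝓑 there exists C ∈ 𝓑 such that for every z ∈ X∖C, either b ≺ z for every b ∈ B, or z ≺ b for every b ∈ B. -/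
open Set

variable {X : Type*}

/-- the key observation (∗) for the relation `≺` induced by a 2-selector. -/
theorem key_observation {X : Type*} (𝓑 : Set (Set X)) (h𝓑 : IsBornology 𝓑)
    (f : Set X → X) (hf : IsTwoSelector 𝓑 f) :
    ∀ B ∈ 𝓑, ∃ C ∈ 𝓑, ∀ z : X, z ∉ C →
      (∀ b ∈ B, b = z ∨ f {b, z} = b) ∨ (∀ b ∈ B, z = b ∨ f {z, b} = z) := by
  intro B hB
  obtain ⟨C', hC', hC'prop⟩ := hf.2 B hB
  refine ⟨C' ∪ B, h𝓑.2.2 _ _ hC' hB, ?_⟩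
  intro z hz
  have hzC' : z ∉ C' := fun h => hz (Or.inl h)
  have hzB : z ∉ B := fun h => hz (Or.inr h)
  have hpair : ∀ c ∈ B, IsPair ({c, z} : Set X) :=
    fun c hc => ⟨c, z, fun h => hzB (h ▸ hc), rfl⟩
  have hmem : ∀ b ∈ B, f {b, z} = b ∨ f {b, z} = z := by
    intro b hb
    have := hf.1 _ (hpair b hb)
    rcases this with h | h
    · exact Or.inl h
    · exact Or.inr h
  have hflat : ∀ b ∈ B, ∀ b' ∈ B, relFlat (entB B) {b, z} {b', z} := by
    intro b hb b' hb'
    constructor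
    · intro x hx
      rcases hx with rfl | rfl
      · exact ⟨b', Or.inl rfl, Or.inr ⟨hb', hb⟩⟩
      · exact ⟨x, Or.inr rfl, Or.inl rfl⟩
    · intro x hx
      rcases hx with rfl | rfl
      · exact ⟨b, Or.inl rfl, Or.inr ⟨hb, hb'⟩⟩
      · exact ⟨x, Or.inr rfl, Or.inl rfl⟩
  by_cases h : ∃ b ∈ B, f {b, z} = z
  · obtain ⟨b₁, hb₁, hfb₁⟩ := h
    right
    intro b hb
    right
    rw [Set.pair_comm]
    rcases hmem b hb with h1 | h1
    · exfalso
      have hC := hC'prop _ _ (hpair b₁ hb₁) (hpair b hb) (hflat b₁ hb₁ b hb)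
      rw [hfb₁, h1] at hC
      rcases hC with heq | ⟨hm1, _⟩
      · exact hzB ((show z = b from heq) ▸ hb)
      · exact hzC' hm1
    · exact h1
  · left
    intro b hb
    right
    rcases hmem b hb with h1 | h1
    · exact h1
    · exact absurd ⟨b, hb, h1⟩ h
end

section
/- Let X = L ∪ R where L = {l_n : n < ω} is ordered as the reverse of ω (l_n < l_m iff m < n), R = {r_α : α < ω₁} is ordered as ω₁, and every element of L is below every element of R. Then the interval bornology 𝓑_≤ on X (generated by the closed intervals of this linear order) has no base linearly ordered by inclusion. -/
open Set

variable {X : Type*}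

namespace NoChainAux

abbrev O := (Cardinal.aleph 1).ord.ToType
abbrev Xt := ℕᵒᵈ ⊕ₗ O

instance : IsWellOrder O (· < ·) := ⟨⟩

noncomputable instance : Nonempty O := by
  rw [Ordinal.nonempty_toType_iff, Ne, Cardinal.ord_eq_zero]
  exact (Cardinal.aleph_pos 1).ne'

def el (n : ℕ) : Xt := toLex (Sum.inl (OrderDual.toDual n))
def er (o : O) : Xt := toLex (Sum.inr o)

lemma el_le_el {n m : ℕ} : el n ≤ el m ↔ m ≤ n := by
  simp [el, Sum.Lex.inl_le_inl_iff]

lemma not_er_le_el {o : O} {n : ℕ} : ¬ er o ≤ el n := Sum.Lex.not_inr_le_inl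

lemma er_le_er {o p : O} : er o ≤ er p ↔ o ≤ p := Sum.Lex.inr_le_inr_iff

lemma hbound (s : Set O) (hs : s.Countable) : ∃ b : O, ∀ x ∈ s, x < b := by
  have h1 : Cardinal.mk s < Order.cof O := by
    rw [Ordinal.cof_toType, Cardinal.isRegular_aleph_one.cof_eq]
    exact lt_of_le_of_lt hs.le_aleph0 Cardinal.aleph0_lt_aleph_one
  exact not_isCofinal_iff.1 (fun h => (Order.cof_le h).not_gt h1)

end NoChainAux

/-- for `X = (reverse ω) + ω₁`, the interval bornology has no base
linearly ordered by inclusion. -/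
theorem no_chain_base_for_antiomega_plus_omega1 :
    ¬ ∃ 𝓑' ⊆ {B : Set (ℕᵒᵈ ⊕ₗ (Cardinal.aleph 1).ord.ToType) | ∃ a b, B ⊆ Set.Icc a b},
      (∀ B ∈ {B : Set (ℕᵒᵈ ⊕ₗ (Cardinal.aleph 1).ord.ToType) | ∃ a b, B ⊆ Set.Icc a b},
        ∃ B' ∈ 𝓑', B ⊆ B') ∧
      IsChain (· ⊆ ·) 𝓑' := by
  open NoChainAux in
  rintro ⟨𝓑', hsub, hcov, hchain⟩
  -- for each n pick a chain member containing `el n`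
  have hel : ∀ n : ℕ, ∃ B ∈ 𝓑', el n ∈ B := by
    intro n
    obtain ⟨B, hB, hBs⟩ := hcov {el n} ⟨el n, el n,
      Set.singleton_subset_iff.2 ⟨le_rfl, le_rfl⟩⟩
    exact ⟨B, hB, hBs rfl⟩
  choose B hB hmem using hel
  -- each `B n` has bounded right part
  have hRb : ∀ n : ℕ, ∃ p : O, ∀ o : O, er o ∈ B n → o ≤ p := by
    intro n
    obtain ⟨a, b, hab⟩ := hsub (hB n)
    rcases b with k | q
    · exact ⟨Classical.arbitrary O, fun o ho =>
        absurd (hab ho).2 Sum.Lex.not_inr_le_inl⟩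
    · exact ⟨q, fun o ho => er_le_er.1 (hab ho).2⟩
  choose p hp using hRb
  obtain ⟨β, hβ⟩ := hbound (Set.range p) (Set.countable_range p)
  have hβn : ∀ n : ℕ, p n < β := fun n => hβ _ ⟨n, rfl⟩
  have hne : ∀ n : ℕ, er β ∉ B n := fun n h => absurd (hp n β h) (not_le.2 (hβn n))
  -- a chain member containing `er β`
  obtain ⟨E, hE, hEs⟩ := hcov {er β} ⟨er β, er β,
    Set.singleton_subset_iff.2 ⟨le_rfl, le_rfl⟩⟩
  have hEm : er β ∈ E := hEs rfl
  have hBE : ∀ n : ℕ, B n ⊆ E := by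
    intro n
    rcases eq_or_ne (B n) E with h | h
    · exact h.le
    · rcases hchain (hB n) hE h with h1 | h1
      · exact h1
      · exact absurd (h1 hEm) (hne n)
  have helE : ∀ n : ℕ, el n ∈ E := fun n => hBE n (hmem n)
  -- but E is bounded: its lower endpoint is below all `el n`, impossible
  obtain ⟨a, b, hab⟩ := hsub hE
  have hale : ∀ n : ℕ, a ≤ el n := fun n => (hab (helE n)).1
  rcases a with k | q
  · have h1 := hale (OrderDual.ofDual k + 1)
    have h2 : OrderDual.ofDual k + 1 ≤ OrderDual.ofDual k := el_le_el.1 h1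
    omega
  · exact not_er_le_el (hale 0)
end

section
/- Let (X,𝓔) be a coarse space with bornology 𝓑 of bounded subsets. If f : [X]² → X is a 2-selector of (X,𝓔), then f is also a 2-selector of the discrete coarse space X_𝓑; that is, f is macro-uniform with respect to the coarse structure on [X]² induced by the hyperballean of X_𝓑. -/
open Set

variable {X : Type*}

lemma pair_eq_of_mem' {X : Type*} {a b x1 x2 : X} (hab : a ≠ b) (h12 : x1 ≠ x2)
    (h1 : x1 ∈ ({a, b} : Set X)) (h2 : x2 ∈ ({a, b} : Set X)) :
    ({a, b} : Set X) = {x1, x2} := by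
  rcases h1 with rfl | rfl <;> rcases h2 with rfl | rfl <;>
    simp_all [Set.pair_comm]

/-- a 2-selector of a coarse space `(X,𝓔)` is a 2-selector of the
discrete coarse space over its bornology of bounded sets. -/
theorem twoSelector_of_coarse_is_twoSelector_discrete {X : Type*}
    (𝓔 : Set (Set (X × X))) (h𝓔 : IsCoarseStructure 𝓔)
    (hconn : ∀ x y : X, ∃ E ∈ 𝓔, (x, y) ∈ E)
    (f : Set X → X)
    (hsel : ∀ A : Set X, IsPair A → f A ∈ A)
    (hmu : ∀ E ∈ 𝓔, ∃ F ∈ 𝓔, ∀ A A' : Set X, IsPair A → IsPair A' →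
      relFlat E A A' → (f A, f A') ∈ F) :
    IsTwoSelector {Y : Set X | IsBoundedIn 𝓔 Y} f := by
  obtain ⟨hdiag, hcomp, hinv, hsub⟩ := h𝓔
  refine ⟨hsel, ?_⟩
  rintro B ⟨E, hE, x, hBx⟩
  have hxB : ∀ b ∈ B, (x, b) ∈ E := by
    intro b hb
    obtain ⟨c, hc, hcb⟩ := hBx hb
    rcases hc with rfl
    exact hcb
  -- entB B is an entourage of 𝓔
  have hEinv : {p : X × X | (p.2, p.1) ∈ E} ∈ 𝓔 := hinv E hE
  have hcomp1 : {p : X × X | ∃ z, (p.1, z) ∈ {p : X × X | (p.2, p.1) ∈ E}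
      ∧ (z, p.2) ∈ E} ∈ 𝓔 := hcomp _ hEinv E hE
  have hentB : entB B ∈ 𝓔 := by
    refine hsub _ hcomp1 (entB B) (fun y => Or.inl rfl) ?_
    rintro ⟨a, b⟩ (h | h)
    · simp only [Set.mem_setOf_eq] at h ⊢
      exact ⟨a, hdiag E hE a, h ▸ hdiag E hE a⟩
    · exact ⟨x, hxB a h.1, hxB b h.2⟩
  obtain ⟨F, hF, hFspec⟩ := hmu (entB B) hentB
  have hFdiag : ∀ y : X, (y, y) ∈ F := hdiag F hF
  set Finv : Set (X × X) := {p : X × X | (p.2, p.1) ∈ F} with hFinvdef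
  -- the union F ∪ Finv ∪ Δ is an entourage
  set H : Set (X × X) := F ∪ Finv ∪ {p : X × X | p.1 = p.2} with hHdef
  have hH : H ∈ 𝓔 := by
    have hc : {p : X × X | ∃ z, (p.1, z) ∈ F ∧ (z, p.2) ∈ Finv} ∈ 𝓔 :=
      hcomp F hF Finv (hinv F hF)
    refine hsub _ hc H (fun y => Or.inr rfl) ?_
    rintro ⟨a, b⟩ ((h | h) | h)
    · exact ⟨b, h, hFdiag b⟩
    · exact ⟨a, hFdiag a, h⟩
    · simp only [Set.mem_setOf_eq] at h
      exact ⟨a, hFdiag a, h ▸ hFdiag a⟩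
  set C : Set X := B ∪ ball F B ∪ ball Finv B with hCdef
  have hCb : C ∈ {Y : Set X | IsBoundedIn 𝓔 Y} := by
    refine ⟨{p : X × X | ∃ z, (p.1, z) ∈ E ∧ (z, p.2) ∈ H}, hcomp E hE H hH, x, ?_⟩
    rintro y ((hy | hy) | hy)
    · exact ⟨x, rfl, y, hxB y hy, Or.inr rfl⟩
    · obtain ⟨b, hb, hby⟩ := hy
      exact ⟨x, rfl, b, hxB b hb, Or.inl (Or.inl hby)⟩
    · obtain ⟨b, hb, hby⟩ := hy
      exact ⟨x, rfl, b, hxB b hb, Or.inl (Or.inr hby)⟩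
  refine ⟨C, hCb, ?_⟩
  intro A A' hA hA' hrel
  have hFA : (f A, f A') ∈ F := hFspec A A' hA hA' hrel
  by_cases heq : f A = f A'
  · exact Or.inl heq
  · -- show both values lie in C
    have hsub1 : ∀ a ∈ A, a ∉ B → a ∈ A' := by
      intro a ha haB
      obtain ⟨a', ha', haa⟩ := hrel.1 ha
      rcases haa with h | h
      · simp only [Set.mem_setOf_eq] at h; exact h ▸ ha'
      · exact absurd h.2 haB
    have hsub2 : ∀ a ∈ A', a ∉ B → a ∈ A := by
      intro a ha haB
      obtain ⟨a', ha', haa⟩ := hrel.2 ha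
      rcases haa with h | h
      · simp only [Set.mem_setOf_eq] at h; exact h ▸ ha'
      · exact absurd h.2 haB
    by_cases hfa : f A ∈ B
    · exact Or.inr ⟨Or.inl (Or.inl hfa), Or.inl (Or.inr ⟨f A, hfa, hFA⟩)⟩
    · by_cases hfa' : f A' ∈ B
      · exact Or.inr ⟨Or.inr ⟨f A', hfa', hFA⟩, Or.inl (Or.inl hfa')⟩
      · exfalso
        have h1 : f A ∈ A := hsel A hA
        have h2 : f A' ∈ A' := hsel A' hA'
        have h1' : f A ∈ A' := hsub1 _ h1 hfa
        have h2' : f A' ∈ A := hsub2 _ h2 hfa'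
        obtain ⟨a, b, hab, rfl⟩ := hA
        obtain ⟨a', b', hab', hA'eq⟩ := hA'
        have e1 : ({a, b} : Set X) = {f {a, b}, f A'} :=
          pair_eq_of_mem' hab heq h1 h2'
        have e2 : ({a', b'} : Set X) = {f {a, b}, f A'} :=
          pair_eq_of_mem' hab' heq (hA'eq ▸ h1') (hA'eq ▸ h2)
        have : ({a, b} : Set X) = A' := by rw [hA'eq, e1, e2]
        exact heq (by rw [this])
end

section
/- The metric coarse space on ℤ² with the sup-metric d((x₁,x₂),(y₁,y₂)) = max(|x₁−y₁|, |x₂−y₂|) does not admit a 2-selector: there is no macro-uniform map f : [ℤ²]² → ℤ² with f(A) ∈ A for all 2-element sets A. -/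
open Set

variable {X : Type*}

namespace NoTwoSelAux

/-- sup metric on `ℤ²` -/
def d2 (p q : ℤ × ℤ) : ℤ := max |p.1 - q.1| |p.2 - q.2|

lemma d2_comm (p q : ℤ × ℤ) : d2 p q = d2 q p := by
  simp [d2, abs_sub_comm]

def E1 : Set ((ℤ × ℤ) × (ℤ × ℤ)) :=
  {p | max |p.1.1 - p.2.1| |p.1.2 - p.2.2| ≤ 1}

lemma d2_le_of {p q : ℤ × ℤ} {r : ℤ} (h1 : p.1 - q.1 ≤ r) (h1' : q.1 - p.1 ≤ r)
    (h2 : p.2 - q.2 ≤ r) (h2' : q.2 - p.2 ≤ r) : d2 p q ≤ r := by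
  simp only [d2]
  rcases abs_cases (p.1 - q.1) with ⟨h, _⟩ | ⟨h, _⟩ <;>
    rcases abs_cases (p.2 - q.2) with ⟨e, _⟩ | ⟨e, _⟩ <;> omega

lemma lt_d2_fst {p q : ℤ × ℤ} {r : ℤ} (h : r < p.1 - q.1 ∨ r < q.1 - p.1) : r < d2 p q := by
  simp only [d2]
  rcases abs_cases (p.1 - q.1) with ⟨h1, _⟩ | ⟨h1, _⟩ <;> omega

lemma lt_d2_snd {p q : ℤ × ℤ} {r : ℤ} (h : r < p.2 - q.2 ∨ r < q.2 - p.2) : r < d2 p q := by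
  simp only [d2]
  rcases abs_cases (p.2 - q.2) with ⟨h1, _⟩ | ⟨h1, _⟩ <;> omega

lemma flat1 {x x' c : ℤ × ℤ} (h : d2 x x' ≤ 1) :
    relFlat E1 ({x, c} : Set (ℤ × ℤ)) ({x', c} : Set (ℤ × ℤ)) := by
  have h1 : |x.1 - x'.1| ≤ 1 := le_trans (le_max_left _ _) h
  have h2 : |x.2 - x'.2| ≤ 1 := le_trans (le_max_right _ _) h
  constructor
  · intro y hy
    rcases hy with hy | hy
    · subst hy
      exact ⟨x', by simp, by
        simp only [E1, mem_setOf_eq]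
        rw [abs_sub_comm x'.1, abs_sub_comm x'.2]; omega⟩
    · simp only [mem_singleton_iff] at hy
      exact ⟨c, by simp, by simp [E1, hy]⟩
  · intro y hy
    rcases hy with hy | hy
    · subst hy
      exact ⟨x, by simp, by simp only [E1, mem_setOf_eq]; omega⟩
    · simp only [mem_singleton_iff] at hy
      exact ⟨c, by simp, by simp [E1, hy]⟩

section

variable (f : Set (ℤ × ℤ) → ℤ × ℤ) (s : ℤ)

lemma step (hs : 0 < s)
    (hsel : ∀ A : Set (ℤ × ℤ), IsPair A → f A ∈ A)
    (hm : ∀ A A' : Set (ℤ × ℤ), IsPair A → IsPair A' →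
      relFlat E1 A A' → d2 (f A) (f A') ≤ s)
    {x x' c : ℤ × ℤ} (hxx' : d2 x x' ≤ 1) (hx : s < d2 x c) (hx' : s < d2 x' c) :
    (f {x, c} = x → f {x', c} = x') ∧ (f {x, c} = c → f {x', c} = c) := by
  have hxc : x ≠ c := by
    rintro rfl
    simp [d2] at hx
    omega
  have hx'c : x' ≠ c := by
    rintro rfl
    simp [d2] at hx'
    omega
  have hA : IsPair ({x, c} : Set (ℤ × ℤ)) := ⟨x, c, hxc, rfl⟩
  have hA' : IsPair ({x', c} : Set (ℤ × ℤ)) := ⟨x', c, hx'c, rfl⟩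
  have hd := hm _ _ hA hA' (flat1 hxx')
  have h1 := hsel _ hA'
  rcases h1 with h1 | h1
  · refine ⟨fun _ => h1, fun h => absurd ?_ (not_le.mpr hx')⟩
    rw [h, h1] at hd
    rwa [d2_comm] at hd
  · simp only [Set.mem_singleton_iff] at h1
    refine ⟨fun h => absurd ?_ (not_le.mpr hx), fun _ => h1⟩
    rw [h, h1] at hd
    exact hd

lemma seg (hs : 0 < s)
    (hsel : ∀ A : Set (ℤ × ℤ), IsPair A → f A ∈ A)
    (hm : ∀ A A' : Set (ℤ × ℤ), IsPair A → IsPair A' →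
      relFlat E1 A A' → d2 (f A) (f A') ≤ s)
    (c : ℤ × ℤ) (g : ℕ → ℤ × ℤ) (n : ℕ)
    (hstep : ∀ i, i < n → d2 (g i) (g (i + 1)) ≤ 1)
    (hfar : ∀ i, i ≤ n → s < d2 (g i) c) :
    (f {g 0, c} = g 0 → f {g n, c} = g n) ∧ (f {g 0, c} = c → f {g n, c} = c) := by
  induction n with
  | zero => exact ⟨id, id⟩
  | succ n ih =>
    have ih' := ih (fun i hi => hstep i (by omega)) (fun i hi => hfar i (by omega))
    have st := step f s hs hsel hm (hstep n (by omega)) (hfar n (by omega))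
      (hfar (n + 1) le_rfl)
    exact ⟨fun h => st.1 (ih'.1 h), fun h => st.2 (ih'.2 h)⟩

end

end NoTwoSelAux

open NoTwoSelAux in
/-- `ℤ²` with the sup-metric coarse structure admits no 2-selector. -/
theorem no_twoSelector_int_plane :
    ¬ ∃ f : Set (ℤ × ℤ) → ℤ × ℤ,
      (∀ A : Set (ℤ × ℤ), IsPair A → f A ∈ A) ∧
      (∀ r : ℤ, 0 < r → ∃ s : ℤ, 0 < s ∧ ∀ A A' : Set (ℤ × ℤ), IsPair A → IsPair A' →
        relFlat {p : (ℤ × ℤ) × (ℤ × ℤ) | max |p.1.1 - p.2.1| |p.1.2 - p.2.2| ≤ r} A A' →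
        max |(f A).1 - (f A').1| |(f A).2 - (f A').2| ≤ s) := by
  rintro ⟨f, hsel, hm⟩
  obtain ⟨s, hs, hm1⟩ := hm 1 one_pos
  set m : ℕ := s.toNat + 2 with hmdef
  have hsm : s < (m : ℤ) := by omega
  have hm1' : ∀ A A' : Set (ℤ × ℤ), IsPair A → IsPair A' →
      relFlat E1 A A' → d2 (f A) (f A') ≤ s := fun A A' h1 h2 h3 => hm1 A A' h1 h2 h3
  have P1 := seg f s hs hsel hm1' (((m : ℤ)), 0) (fun i => ((0 : ℤ), (i : ℤ))) m
    (by intro i hi; apply d2_le_of <;> (dsimp only; push_cast; try omega))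
    (by intro i hi; apply lt_d2_fst; dsimp only; omega)
  have P2a := seg f s hs hsel hm1' (((m : ℤ)), 0) (fun i => ((i : ℤ), (m : ℤ))) m
    (by intro i hi; apply d2_le_of <;> (dsimp only; push_cast; try omega))
    (by intro i hi; apply lt_d2_snd; dsimp only; omega)
  have P2b := seg f s hs hsel hm1' (((m : ℤ)), 0) (fun i => ((m : ℤ) + (i : ℤ), (m : ℤ))) m
    (by intro i hi; apply d2_le_of <;> (dsimp only; push_cast; try omega))
    (by intro i hi; apply lt_d2_snd; dsimp only; omega)
  have P3 := seg f s hs hsel hm1' (((m : ℤ)), 0) (fun i => ((m : ℤ) + (m : ℤ), (m : ℤ) - (i : ℤ))) m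
    (by intro i hi; apply d2_le_of <;> (dsimp only; push_cast; try omega))
    (by intro i hi; apply lt_d2_fst; dsimp only; omega)
  have P4 := seg f s hs hsel hm1' ((m : ℤ) + (m : ℤ), 0) (fun i => ((m : ℤ), -(i : ℤ))) m
    (by intro i hi; apply d2_le_of <;> (dsimp only; push_cast; try omega))
    (by intro i hi; apply lt_d2_fst; dsimp only; omega)
  have P5a := seg f s hs hsel hm1' ((m : ℤ) + (m : ℤ), 0) (fun i => ((m : ℤ) - (i : ℤ), -(m : ℤ))) m
    (by intro i hi; apply d2_le_of <;> (dsimp only; push_cast; try omega))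
    (by intro i hi; apply lt_d2_snd; dsimp only; omega)
  have P5b := seg f s hs hsel hm1' ((m : ℤ) + (m : ℤ), 0) (fun i => (-(i : ℤ), -(m : ℤ))) m
    (by intro i hi; apply d2_le_of <;> (dsimp only; push_cast; try omega))
    (by intro i hi; apply lt_d2_snd; dsimp only; omega)
  have P6 := seg f s hs hsel hm1' ((m : ℤ) + (m : ℤ), 0) (fun i => (-(m : ℤ), -(m : ℤ) + (i : ℤ))) m
    (by intro i hi; apply d2_le_of <;> (dsimp only; push_cast; try omega))
    (by intro i hi; apply lt_d2_fst; dsimp only; omega)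
  have P7 := seg f s hs hsel hm1' ((m : ℤ) + (m : ℤ), 0) (fun i => (-(m : ℤ) + (i : ℤ), 0)) m
    (by intro i hi; apply d2_le_of <;> (dsimp only; push_cast; try omega))
    (by intro i hi; apply lt_d2_fst; dsimp only; omega)
  have P8 := seg f s hs hsel hm1' ((0 : ℤ), (0 : ℤ)) (fun i => ((m : ℤ) + (m : ℤ), (i : ℤ))) m
    (by intro i hi; apply d2_le_of <;> (dsimp only; push_cast; try omega))
    (by intro i hi; apply lt_d2_fst; dsimp only; omega)
  have P9 := seg f s hs hsel hm1' ((0 : ℤ), (0 : ℤ)) (fun i => ((m : ℤ) + (m : ℤ) - (i : ℤ), (m : ℤ))) m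
    (by intro i hi; apply d2_le_of <;> (dsimp only; push_cast; try omega))
    (by intro i hi; apply lt_d2_fst; dsimp only; omega)
  have P10 := seg f s hs hsel hm1' ((0 : ℤ), (0 : ℤ)) (fun i => ((m : ℤ), (m : ℤ) - (i : ℤ))) m
    (by intro i hi; apply d2_le_of <;> (dsimp only; push_cast; try omega))
    (by intro i hi; apply lt_d2_fst; dsimp only; omega)
  simp only [Nat.cast_zero, sub_zero, add_zero, neg_zero, sub_self, neg_add_cancel,
    add_sub_cancel_right] at P1 P2a P2b P3 P4 P5a P5b P6 P7 P8 P9 P10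
  have hmne : ((0 : ℤ), (0 : ℤ)) ≠ (((m : ℤ)), (0 : ℤ)) := by
    intro h
    rw [Prod.mk.injEq] at h
    omega
  have hA0 : IsPair ({((0 : ℤ), (0 : ℤ)), (((m : ℤ)), 0)} : Set (ℤ × ℤ)) := ⟨_, _, hmne, rfl⟩
  rcases hsel _ hA0 with h0 | h0
  · -- f picks (0,0)
    have h1 := P1.1 h0
    have h2 := P2a.1 h1
    have h3 := P2b.1 h2
    have h4 := P3.1 h3
    rw [Set.pair_comm ((m : ℤ) + (m : ℤ), (0 : ℤ)) (((m : ℤ)), (0 : ℤ))] at h4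
    have h5 := P4.2 h4
    have h6 := P5a.2 h5
    have h7 := P5b.2 h6
    have h8 := P6.2 h7
    have h9 := P7.2 h8
    rw [Set.pair_comm ((0 : ℤ), (0 : ℤ)) ((m : ℤ) + (m : ℤ), (0 : ℤ))] at h9
    have h10 := P8.1 h9
    have h11 := P9.1 h10
    have h12 := P10.1 h11
    rw [Set.pair_comm (((m : ℤ)), (0 : ℤ)) ((0 : ℤ), (0 : ℤ))] at h12
    rw [h0] at h12
    exact hmne h12
  · -- f picks (m,0)
    simp only [Set.mem_singleton_iff] at h0
    have h1 := P1.2 h0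
    have h2 := P2a.2 h1
    have h3 := P2b.2 h2
    have h4 := P3.2 h3
    rw [Set.pair_comm ((m : ℤ) + (m : ℤ), (0 : ℤ)) (((m : ℤ)), (0 : ℤ))] at h4
    have h5 := P4.1 h4
    have h6 := P5a.1 h5
    have h7 := P5b.1 h6
    have h8 := P6.1 h7
    have h9 := P7.1 h8
    rw [Set.pair_comm ((0 : ℤ), (0 : ℤ)) ((m : ℤ) + (m : ℤ), (0 : ℤ))] at h9
    have h10 := P8.2 h9
    have h11 := P9.2 h10
    have h12 := P10.2 h11
    rw [Set.pair_comm (((m : ℤ)), (0 : ℤ)) ((0 : ℤ), (0 : ℤ))] at h12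
    rw [h0] at h12
    exact hmne h12.symm
end

section
/- If G is a group whose finitary coarse space (G, 𝓔_G) admits a 2-selector, then G is countable. -/
open Set

variable {X : Type*}

/-- The entourage `{(x,y) : y ∈ F x}` of the finitary coarse structure of a group. -/
def entG {G : Type*} [Group G] (F : Set G) : Set (G × G) := {p | ∃ g ∈ F, p.2 = g * p.1}

/-- Auxiliary: the pairs `{u, v}` and `{u, g*v}` are flat w.r.t. `entG {1, g, g⁻¹}`. -/
lemma flat_pairs_aux {G : Type*} [Group G] (g u v : G) :
    relFlat (entG ({1, g, g⁻¹} : Set G)) {u, v} {u, g * v} := by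
  constructor
  · intro x hx
    simp only [Set.mem_insert_iff, Set.mem_singleton_iff] at hx
    rcases hx with rfl | rfl
    · exact ⟨x, by simp, 1, by simp, (one_mul x).symm⟩
    · exact ⟨g * x, by simp, g⁻¹, by simp, by group⟩
  · intro x hx
    simp only [Set.mem_insert_iff, Set.mem_singleton_iff] at hx
    rcases hx with rfl | rfl
    · exact ⟨x, by simp, 1, by simp, (one_mul x).symm⟩
    · exact ⟨v, by simp, g, by simp, rfl⟩

/-- a group whose finitary coarse space admits a 2-selector is countable. -/
theorem countable_of_finitary_twoSelector {G : Type*} [Group G]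
    (h : ∃ f : Set G → G, (∀ A : Set G, IsPair A → f A ∈ A) ∧
      ∀ F : Set G, F.Finite → (1 : G) ∈ F → ∃ F' : Set G, F'.Finite ∧ (1 : G) ∈ F' ∧
        ∀ A A' : Set G, IsPair A → IsPair A' → relFlat (entG F) A A' →
          (f A, f A') ∈ entG F') :
    Countable G := by
  by_contra hc
  obtain ⟨f, hf, hu⟩ := h
  classical
  -- `G` is infinite
  have hGinf : Infinite G := by
    by_contra hfin
    rw [not_infinite_iff_finite] at hfin
    exact hc (Finite.to_countable)
  -- the selector picks one of the two elements of a pair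
  have hmem : ∀ u v : G, u ≠ v → f {u, v} = u ∨ f {u, v} = v := by
    intro u v huv
    have := hf {u, v} ⟨u, v, huv, rfl⟩
    simpa using this
  -- for each `g`, a finite control set `Φ g`
  have hΦ : ∀ g : G, ∃ F' : Set G, F'.Finite ∧ (1 : G) ∈ F' ∧
      ∀ A A' : Set G, IsPair A → IsPair A' → relFlat (entG ({1, g, g⁻¹} : Set G)) A A' →
        (f A, f A') ∈ entG F' := by
    intro g
    exact hu {1, g, g⁻¹} (((Set.finite_singleton g⁻¹).insert g).insert 1) (by simp)
  choose Φ hΦfin hΦone hΦkey using hΦ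
  -- the key instance of uniformity
  have L1 : ∀ (g u v : G), u ≠ v → u ≠ g * v →
      ∃ k ∈ Φ g, f {u, g * v} = k * f {u, v} := by
    intro g u v huv huv'
    have := hΦkey g {u, v} {u, g * v} ⟨u, v, huv, rfl⟩ ⟨u, g * v, huv', rfl⟩
      (flat_pairs_aux g u v)
    exact this
  -- a countably infinite set `D` containing `1`
  set e := Infinite.natEmbedding G with he
  set D : Set G := insert 1 (Set.range e) with hD
  have hDc : D.Countable := (Set.countable_range e).insert 1
  have hDi : D.Infinite := (Set.infinite_range_of_injective e.injective).mono
    (Set.subset_insert _ _)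
  have hD1 : (1 : G) ∈ D := Set.mem_insert _ _
  -- the countable set of controls along `D`-differences
  set S : Set G := ⋃ d ∈ D, ⋃ d' ∈ D, (Φ (d' * d⁻¹) ∪ (Φ (d' * d⁻¹))⁻¹) with hS
  have hSc : S.Countable := by
    refine Set.Countable.biUnion hDc (fun d _ => Set.Countable.biUnion hDc (fun d' _ => ?_))
    exact ((hΦfin _).union (hΦfin _).inv).countable
  have hS1 : (1 : G) ∈ S := by
    refine Set.mem_biUnion hD1 ?_
    refine Set.mem_biUnion hD1 ?_
    exact Or.inl (by simpa using hΦone (1 * 1⁻¹))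
  have hSmem : ∀ d ∈ D, ∀ d' ∈ D, ∀ k ∈ Φ (d' * d⁻¹), k ∈ S := by
    intro d hd d' hd' k hk
    exact Set.mem_biUnion hd (Set.mem_biUnion hd' (Or.inl hk))
  -- the countable "bad neighbourhood" of a point
  set N : G → Set G := fun z => {x : G | ∃ s ∈ S, ∃ d ∈ D, x = s * (d * z)} with hN
  have hNc : ∀ z, (N z).Countable := by
    intro z
    have : N z = (fun p : G × G => p.1 * (p.2 * z)) '' (S ×ˢ D) := by
      ext x
      constructor
      · rintro ⟨s, hs, d, hd, rfl⟩
        exact ⟨(s, d), ⟨hs, hd⟩, rfl⟩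
      · rintro ⟨⟨s, d⟩, ⟨hs, hd⟩, rfl⟩
        exact ⟨s, hs, d, hd, rfl⟩
    rw [this]
    exact (hSc.prod hDc).image _
  have hself : ∀ z : G, z ∈ N z := by
    intro z
    exact ⟨1, hS1, 1, hD1, by simp⟩
  have hne : ∀ z u : G, u ∉ N z → ∀ d ∈ D, u ≠ d * z := by
    intro z u hu d hd hcon
    exact hu ⟨1, hS1, d, hd, by rw [hcon, one_mul]⟩
  -- Lemma 2: constancy along the `D`-orbit of `z`, for `u` outside `N z`
  have L2 : ∀ z u, u ∉ N z → ∀ d ∈ D, ∀ d' ∈ D,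
      f {u, d * z} = d * z → f {u, d' * z} = d' * z := by
    intro z u hu d hd d' hd' hfd
    by_cases hdd : d' * z = d * z
    · rw [hdd]; exact hfd
    have hune : u ≠ d * z := hne z u hu d hd
    have hune' : u ≠ d' * z := hne z u hu d' hd'
    have hrew : d' * d⁻¹ * (d * z) = d' * z := by group
    obtain ⟨k, hk, hkey⟩ := L1 (d' * d⁻¹) u (d * z) hune (by rw [hrew]; exact hune')
    rw [hrew, hfd] at hkey
    rcases hmem u (d' * z) hune' with h1 | h1
    · exfalso
      exact hu ⟨k, hSmem d hd d' hd' k hk, d, hd, by rw [← h1, hkey]⟩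
    · exact h1
  have L2' : ∀ z u, u ∉ N z → ∀ d ∈ D,
      ((f {u, z} = z) ↔ (f {u, d * z} = d * z)) := by
    intro z u hu d hd
    constructor
    · intro h0
      have := L2 z u hu 1 hD1 d hd
      rw [one_mul] at this
      exact this h0
    · intro h0
      have := L2 z u hu d hd 1 hD1
      rw [one_mul] at this
      exact this h0
  -- Lemma 3: for `u, w` outside `N z`, the selector orientation toward `z` agrees
  have L3 : ∀ z u w : G, u ∉ N z → w ∉ N z →
      ((f {u, z} = z) ↔ (f {w, z} = z)) := by
    intro z u w hu hw
    by_cases huw : u = w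
    · rw [huw]
    set γ := w * u⁻¹ with hγ
    have hγu : γ * u = w := by rw [hγ]; group
    -- choose a generic point of the orbit `D * z`
    have hDzinf : ((fun d => d * z) '' D).Infinite :=
      hDi.image (fun a _ b _ hab => by
        exact mul_right_cancel hab)
    have hfin : (((fun k => k * u) '' Φ γ) ∪ ((fun k => k⁻¹ * w) '' Φ γ)).Finite :=
      ((hΦfin γ).image _).union ((hΦfin γ).image _)
    obtain ⟨v, hvD, hvE⟩ := (hDzinf.diff hfin).nonempty
    obtain ⟨d, hd, rfl⟩ := hvD
    have hvu : d * z ≠ u := fun hcon => (hne z u hu d hd) hcon.symm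
    have hvw : d * z ≠ w := fun hcon => (hne z w hw d hd) hcon.symm
    obtain ⟨k, hk, hkey⟩ := L1 γ (d * z) u hvu (by rw [hγu]; exact hvw)
    rw [hγu] at hkey
    have middle : (f {d * z, u} = d * z) ↔ (f {d * z, w} = d * z) := by
      constructor
      · intro h1
        rcases hmem (d * z) w hvw with h2 | h2
        · exact h2
        · exfalso
          rw [h2, h1] at hkey
          exact hvE (Or.inr ⟨k, hk, by rw [hkey]; group⟩)
      · intro h2
        rcases hmem (d * z) u hvu with h1 | h1
        · exact h1
        · exfalso
          rw [h2, h1] at hkey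
          exact hvE (Or.inl ⟨k, hk, hkey.symm⟩)
    have cu : ({u, d * z} : Set G) = {d * z, u} := Set.pair_comm u (d * z)
    have cw : ({w, d * z} : Set G) = {d * z, w} := Set.pair_comm w (d * z)
    calc (f {u, z} = z) ↔ (f {u, d * z} = d * z) := L2' z u hu d hd
      _ ↔ (f {d * z, u} = d * z) := by rw [cu]
      _ ↔ (f {d * z, w} = d * z) := middle
      _ ↔ (f {w, d * z} = d * z) := by rw [cw]
      _ ↔ (f {w, z} = z) := (L2' z w hw d hd).symm
  -- antisymmetry of the selector orientation
  have hanti : ∀ x y : G, x ≠ y → ((f {x, y} = y) ↔ ¬ (f {y, x} = x)) := by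
    intro x y hxy
    rw [Set.pair_comm y x]
    rcases hmem x y hxy with h1 | h1
    · constructor
      · intro h2
        exact absurd (h1.symm.trans h2) hxy
      · intro h2
        exact absurd h1 h2
    · constructor
      · intro _ h2
        exact hxy (h2.symm.trans h1)
      · intro _
        exact h1
  -- pick three pairwise independent points
  set Bad : G → Set G := fun z => N z ∪ {x | z ∈ N x} with hBad
  have hBadc : ∀ z, (Bad z).Countable := by
    intro z
    refine (hNc z).union ?_
    have : {x | z ∈ N x} = (fun p : G × G => p.2⁻¹ * (p.1⁻¹ * z)) '' (S ×ˢ D) := by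
      ext x
      constructor
      · rintro ⟨s, hs, d, hd, hx⟩
        exact ⟨(s, d), ⟨hs, hd⟩, by rw [hx]; group⟩
      · rintro ⟨⟨s, d⟩, ⟨hs, hd⟩, rfl⟩
        exact ⟨s, hs, d, hd, by group⟩
    rw [this]
    exact (hSc.prod hDc).image _
  have hpick : ∀ s : Set G, s.Countable → ∃ x : G, x ∉ s := by
    intro s hs
    have hne' : s ≠ Set.univ := by
      intro hcon
      exact hc (Set.countable_univ_iff.mp (hcon ▸ hs))
    exact (Set.ne_univ_iff_exists_notMem s).mp hne'
  obtain ⟨z₁⟩ : Nonempty G := One.instNonempty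
  obtain ⟨z₂, hz₂⟩ := hpick (Bad z₁) (hBadc z₁)
  obtain ⟨z₃, hz₃⟩ := hpick (Bad z₁ ∪ Bad z₂) ((hBadc z₁).union (hBadc z₂))
  have h21 : z₂ ∉ N z₁ := fun hcon => hz₂ (Or.inl hcon)
  have h12 : z₁ ∉ N z₂ := fun hcon => hz₂ (Or.inr hcon)
  have h31 : z₃ ∉ N z₁ := fun hcon => hz₃ (Or.inl (Or.inl hcon))
  have h13 : z₁ ∉ N z₃ := fun hcon => hz₃ (Or.inl (Or.inr hcon))
  have h32 : z₃ ∉ N z₂ := fun hcon => hz₃ (Or.inr (Or.inl hcon))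
  have h23 : z₂ ∉ N z₃ := fun hcon => hz₃ (Or.inr (Or.inr hcon))
  have hne12 : z₁ ≠ z₂ := fun hcon => h12 (hcon ▸ hself z₁)
  have hne13 : z₁ ≠ z₃ := fun hcon => h13 (hcon ▸ hself z₁)
  have hne23 : z₂ ≠ z₃ := fun hcon => h23 (hcon ▸ hself z₂)
  have A1 : (f {z₁, z₂} = z₂) ↔ (f {z₃, z₂} = z₂) := L3 z₂ z₁ z₃ h12 h32
  have A2 : (f {z₂, z₃} = z₃) ↔ (f {z₁, z₃} = z₃) := L3 z₃ z₂ z₁ h23 h13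
  have A3 : (f {z₃, z₁} = z₁) ↔ (f {z₂, z₁} = z₁) := L3 z₁ z₃ z₂ h31 h21
  have n12 : (f {z₁, z₂} = z₂) ↔ ¬ (f {z₂, z₁} = z₁) := hanti z₁ z₂ hne12
  have n23 : (f {z₂, z₃} = z₃) ↔ ¬ (f {z₃, z₂} = z₂) := hanti z₂ z₃ hne23
  have n13 : (f {z₁, z₃} = z₃) ↔ ¬ (f {z₃, z₁} = z₁) := hanti z₁ z₃ hne13
  tauto
end

section
/- Every discrete coarse space (X,𝓔) coincides with X_𝓑, where 𝓑 is the bornology of bounded subsets of (X,𝓔): the coarse structure 𝓔 equals the coarse structure generated by the entourages ∆_X ∪ (B×B) for B ∈ 𝓑. -/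
open Set

variable {X : Type*}

/-- every discrete coarse space coincides with `X_𝓑` for its bornology
of bounded sets. -/
theorem discrete_coarse_space_eq {X : Type*} (𝓔 : Set (Set (X × X)))
    (h𝓔 : IsCoarseStructure 𝓔)
    (hconn : ∀ x y : X, ∃ E ∈ 𝓔, (x, y) ∈ E)
    (hdisc : ∀ E ∈ 𝓔, ∃ B : Set X, IsBoundedIn 𝓔 B ∧ ∀ x ∉ B, ball E {x} = {x}) :
    𝓔 = {E : Set (X × X) |
      (∀ x : X, (x, x) ∈ E) ∧ ∃ B : Set X, IsBoundedIn 𝓔 B ∧ E ⊆ entB B} := by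

  obtain ⟨diag, comp, symm, down⟩ := h𝓔
  ext E
  simp only [Set.mem_setOf_eq]
  constructor
  · intro hE
    refine ⟨diag E hE, ?_⟩
    obtain ⟨B₀, ⟨E₁, hE₁, x₁, hB₀⟩, hball⟩ := hdisc E hE
    refine ⟨B₀ ∪ ball E B₀, ?_, ?_⟩
    · refine ⟨{p : X × X | ∃ z, (p.1, z) ∈ E₁ ∧ (z, p.2) ∈ E}, comp E₁ hE₁ E hE, x₁, ?_⟩
      rintro y (hy | ⟨a, ha, hay⟩)
      · obtain ⟨a', ha', hxy⟩ := hB₀ hy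
        rw [Set.mem_singleton_iff] at ha'; rw [ha'] at hxy
        exact ⟨x₁, rfl, y, hxy, diag E hE y⟩
      · obtain ⟨a', ha', hxa⟩ := hB₀ ha
        rw [Set.mem_singleton_iff] at ha'; rw [ha'] at hxa
        exact ⟨x₁, rfl, a, hxa, hay⟩
    · rintro ⟨x, y⟩ hxy
      by_cases hx : x ∈ B₀
      · exact Or.inr ⟨Or.inl hx, Or.inr ⟨x, hx, hxy⟩⟩
      · have : y ∈ ball E {x} := ⟨x, rfl, hxy⟩
        rw [hball x hx] at this
        exact Or.inl this.symm
  · rintro ⟨hdiagE, B, ⟨E₁, hE₁, x₁, hB⟩, hEsub⟩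
    have hsymm := symm E₁ hE₁
    have hcomp := comp _ hsymm E₁ hE₁
    refine down _ hcomp E hdiagE ?_
    intro p hp
    rcases hEsub hp with h | ⟨ha, hb⟩
    · exact ⟨p.1, diag E₁ hE₁ p.1, h ▸ diag E₁ hE₁ p.1⟩
    · obtain ⟨a', ha', h1⟩ := hB ha
      rw [Set.mem_singleton_iff] at ha'; rw [ha'] at h1
      obtain ⟨b', hb', h2⟩ := hB hb
      rw [Set.mem_singleton_iff] at hb'; rw [hb'] at h2
      exact ⟨x₁, h1, h2⟩
end

section
/- A countable group G has the property that its bornology of finite subsets [G]^{<ω} has an interval base: there is a linear order ≤ on G such that every finite subset of G is contained in a closed interval [a,b] and every closed interval is finite; consequently the discrete coarse space G_{[G]^{<ω}} admits a selector. -/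
open Set

variable {X : Type*}

/-- a countable group has a linear order making intervals a base of the
bornology of finite sets, with all intervals finite; hence its discrete coarse space
admits a selector. -/
theorem countable_group_intervalBase {G : Type*} [Group G] [Countable G] :
    ∃ r : LinearOrder G,
      (∀ S : Set G, S.Finite → ∃ a b : G, S ⊆ {x | r.le a x ∧ r.le x b}) ∧
      (∀ a b : G, {x | r.le a x ∧ r.le x b}.Finite) ∧
      ∃ f : Set G → G, IsSelector {S : Set G | S.Finite} f := by
  classical
  obtain ⟨f, hf⟩ := exists_injective_nat G
  refine ⟨LinearOrder.lift' f hf, ?_, ?_, ?_⟩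
  · intro S hS
    rcases S.eq_empty_or_nonempty with rfl | hne
    · exact ⟨1, 1, by simp⟩
    · obtain ⟨a, _, ha⟩ := S.exists_min_image f hS hne
      obtain ⟨b, _, hb⟩ := S.exists_max_image f hS hne
      exact ⟨a, b, fun x hx => ⟨ha x hx, hb x hx⟩⟩
  · intro a b
    have hsub : {x : G | f a ≤ f x ∧ f x ≤ f b} ⊆ f ⁻¹' (Set.Icc (f a) (f b)) :=
      fun x hx => hx
    exact ((Set.finite_Icc (f a) (f b)).preimage hf.injOn).subset hsub
  · set sel : Set G → G := fun A =>
      if h : ∃ a ∈ A, ∀ x ∈ A, f a ≤ f x then h.choose else 1 with hsel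
    have hmin : ∀ A : Set G, A.Finite → A.Nonempty →
        sel A ∈ A ∧ ∀ x ∈ A, f (sel A) ≤ f x := by
      intro A hA hne
      have h : ∃ a ∈ A, ∀ x ∈ A, f a ≤ f x := A.exists_min_image f hA hne
      simp only [hsel, dif_pos h]
      exact ⟨h.choose_spec.1, h.choose_spec.2⟩
    refine ⟨sel, fun A hA hne => (hmin A hA hne).1, ?_⟩
    intro B hB
    refine ⟨{x | ∃ b ∈ B, f x ≤ f b}, ?_, ?_⟩
    · have hEq : {x : G | ∃ b ∈ B, f x ≤ f b} = ⋃ b ∈ B, f ⁻¹' (Set.Iic (f b)) := by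
        ext x; simp
      rw [hEq]
      exact Set.Finite.biUnion hB fun b _ => (Set.finite_Iic (f b)).preimage hf.injOn
    · intro A A' hA hAne hA' hA'ne hrel
      obtain ⟨hmA, hminA⟩ := hmin A hA hAne
      obtain ⟨hmA', hminA'⟩ := hmin A' hA' hA'ne
      set m := sel A with hm
      set m' := sel A' with hm'
      by_cases heq : m = m'
      · exact Or.inl heq
      · have key : ∀ (S S' : Set G) (n n' : G), n ∈ S → (∀ x ∈ S, f n ≤ f x) →
            n' ∈ S' → S' ⊆ ball (entB B) S → f n' < f n →
            n' ∈ B ∧ ∃ b ∈ B, f n ≤ f b := by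
          intro S S' n n' hnS hminS hn'S' hsub hlt
          obtain ⟨a, haS, hab⟩ := hsub hn'S'
          rcases hab with hEq | hBB
          · have han' : a = n' := hEq
            exact absurd (hminS n' (han' ▸ haS)) (not_le.mpr hlt)
          · exact ⟨hBB.2, a, hBB.1, hminS a haS⟩
        rcases lt_trichotomy (f m) (f m') with hlt | hEq | hlt
        · obtain ⟨hmB, b, hbB, hle⟩ := key A' A m' m hmA' hminA' hmA hrel.1 hlt
          exact Or.inr ⟨⟨m, hmB, le_refl _⟩, ⟨b, hbB, hle⟩⟩
        · exact absurd (hf hEq) heq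
        · obtain ⟨hmB, b, hbB, hle⟩ := key A A' m m' hmA hminA hmA' hrel.2 hlt
          exact Or.inr ⟨⟨b, hbB, hle⟩, ⟨m', hmB, le_refl _⟩⟩
end
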